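/- arXiv:1207.6368 — 2 statements merged into one kernel-verified Lean document; each statement's English description precedes it below -/
import Mathlib

section
/- Let S(t) = a₁ e^{2πi ω₁ t} + a₂ e^{2πi ω₂ t} + (other terms), where ω₁ ≠ ω₂ are integers in [−N/2, N/2), the coefficients a₁, a₂ are nonzero real numbers, p > 1 is an integer, h ∈ {0,…,p−1}, and I(S,h;p) = {1, 2}, i.e., exactly the two frequencies ω₁, ω₂ are congruent to h modulo p. Then for any ε = a/b with a, b coprime integers, a ≠ 0, and b ≥ N, one has |Ŝ_{p,ε}[h]| ≠ |Ŝ_p[h]|. -/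
/-- The index set `I(S,h;p)` of frequencies congruent to `h` modulo `p`. -/
def aliasIdx {k : ℕ} (ω : Fin k → ℤ) (p h : ℕ) : Finset (Fin k) :=
  Finset.univ.filter (fun j => ω j ≡ (h : ℤ) [ZMOD (p : ℤ)])

/-- The signal `S(t) = ∑ j, a j * exp(2πi ω_j t)`. -/
noncomputable def signal {k : ℕ} (a : Fin k → ℂ) (ω : Fin k → ℤ) (t : ℝ) : ℂ :=
  ∑ j, a j * Complex.exp (2 * (Real.pi : ℂ) * Complex.I * (ω j : ℂ) * (t : ℂ))

/-- The shifted sub-sampled DFT `Ŝ_{p,ε}[h]`. -/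
noncomputable def sdft {k : ℕ} (a : Fin k → ℂ) (ω : Fin k → ℤ) (p : ℕ) (ε : ℝ) (h : ℕ) : ℂ :=
  ∑ n ∈ Finset.range p,
    signal a ω ((n : ℝ) / (p : ℝ) + ε) *
      Complex.exp (-(2 * (Real.pi : ℂ) * Complex.I) * (n : ℂ) * (h : ℂ) / (p : ℂ))

/-!
Sampling at `n/p + ε` and taking the `h`-th DFT coefficient aliases the spectrum: only the
frequencies `ω_j ≡ h (mod p)` survive, so `Ŝ_{p,ε}[h] = p (a₁ e(ω₁ε) + a₂ e(ω₂ε))` with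
`e(x) = exp(2πix)`. For real nonzero `a₁, a₂`,
`|a₁ e(x₁) + a₂ e(x₂)|² = a₁² + a₂² + 2a₁a₂ cos 2π(x₁ - x₂)`, so equal moduli at `ε` and at `0`
force `(ω₁ - ω₂)c/b ∈ ℤ`. As `c` and `b` are coprime this means `b ∣ ω₁ - ω₂`, impossible since
`0 < |ω₁ - ω₂| < N ≤ b`.
-/

open Finset Complex Real

theorem geom_sum_eq_ite_of_pow_eq_one {K : Type*} [Field K] [DecidableEq K] {x : K} {p : ℕ}
    (hx : x ^ p = 1) : ∑ n ∈ range p, x ^ n = if x = 1 then (p : K) else 0 := by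
  split_ifs with h1
  · simp [h1]
  · rw [geom_sum_eq h1, hx, sub_self, zero_div]

theorem sum_range_exp_zpow_eq_ite {p : ℕ} (hp : p ≠ 0) (m : ℤ) :
    ∑ n ∈ range p, (exp (2 * π * I / p) ^ m) ^ n = if (p : ℤ) ∣ m then (p : ℂ) else 0 := by
  have hζ := isPrimitiveRoot_exp p hp
  have hpow : (exp (2 * π * I / p) ^ m) ^ p = 1 := by
    rw [← zpow_natCast, ← zpow_mul, mul_comm m, zpow_mul, zpow_natCast, hζ.pow_eq_one, one_zpow]
  simp only [geom_sum_eq_ite_of_pow_eq_one hpow, hζ.zpow_eq_one_iff_dvd]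

theorem exp_sample_mul_exp_neg_eq (p : ℕ) (w : ℤ) (ε : ℝ) (n h : ℕ) :
    exp (2 * π * I * (w : ℂ) * (((n : ℝ) / p + ε : ℝ) : ℂ)) * exp (-(2 * π * I) * n * h / p)
      = exp (2 * π * I * ((w * ε : ℝ) : ℂ)) * (exp (2 * π * I / p) ^ (w - h)) ^ n := by
  rw [← exp_int_mul, ← Complex.exp_nat_mul, ← Complex.exp_add, ← Complex.exp_add]
  congr 1
  push_cast
  ring

theorem sdft_eq_mul_sum_aliasIdx {k : ℕ} (a : Fin k → ℂ) (ω : Fin k → ℤ) {p : ℕ} (hp : p ≠ 0)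
    (ε : ℝ) (h : ℕ) :
    sdft a ω p ε h = p * ∑ j ∈ aliasIdx ω p h, a j * exp (2 * π * I * ((ω j * ε : ℝ) : ℂ)) := by
  calc sdft a ω p ε h
      = ∑ j, a j * exp (2 * π * I * ((ω j * ε : ℝ) : ℂ)) *
          ∑ n ∈ range p, (exp (2 * π * I / p) ^ (ω j - h)) ^ n := by
        simp only [sdft, signal, sum_mul, mul_sum]
        rw [sum_comm]
        refine sum_congr rfl fun j _ => sum_congr rfl fun n _ => ?_
        rw [mul_assoc (a j), exp_sample_mul_exp_neg_eq, ← mul_assoc]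
    _ = p * ∑ j ∈ aliasIdx ω p h, a j * exp (2 * π * I * ((ω j * ε : ℝ) : ℂ)) := by
        simp_rw [sum_range_exp_zpow_eq_ite hp, aliasIdx, sum_filter, mul_sum, mul_ite, mul_zero,
          Int.modEq_comm.trans Int.modEq_iff_dvd, mul_comm (p : ℂ)]

theorem norm_ofReal_mul_exp_add_sq (r₁ r₂ θ₁ θ₂ : ℝ) :
    ‖(r₁ : ℂ) * exp (θ₁ * I) + r₂ * exp (θ₂ * I)‖ ^ 2
      = r₁ ^ 2 + r₂ ^ 2 + 2 * r₁ * r₂ * Real.cos (θ₁ - θ₂) := by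
  simp only [Complex.sq_norm, normSq_apply, add_re, add_im, re_ofReal_mul, im_ofReal_mul,
    exp_ofReal_mul_I_re, exp_ofReal_mul_I_im, Real.cos_sub]
  nlinarith [Real.sin_sq_add_cos_sq θ₁, Real.sin_sq_add_cos_sq θ₂]

theorem exists_int_sub_eq_of_norm_add_eq {r₁ r₂ : ℝ} (hr₁ : r₁ ≠ 0) (hr₂ : r₂ ≠ 0) {x₁ x₂ : ℝ}
    (H : ‖(r₁ : ℂ) * exp (2 * π * I * x₁) + r₂ * exp (2 * π * I * x₂)‖ = ‖(r₁ + r₂ : ℂ)‖) :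
    ∃ n : ℤ, x₁ - x₂ = n := by
  have hcos : Real.cos (2 * π * x₁ - 2 * π * x₂) = 1 := by
    have H2 := congrArg (· ^ 2) H
    rw [show (2 * π * I * x₁ : ℂ) = ((2 * π * x₁ : ℝ) : ℂ) * I by push_cast; ring,
      show (2 * π * I * x₂ : ℂ) = ((2 * π * x₂ : ℝ) : ℂ) * I by push_cast; ring,
      norm_ofReal_mul_exp_add_sq, ← ofReal_add, norm_real, Real.norm_eq_abs, sq_abs] at H2
    have hr : 2 * r₁ * r₂ ≠ 0 := by positivity
    exact mul_left_cancel₀ hr (by linarith)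
  obtain ⟨n, hn⟩ := (Real.cos_eq_one_iff _).1 hcos
  exact ⟨n, by nlinarith [Real.pi_pos]⟩

theorem intCast_mul_div_ne_intCast {c b d : ℤ} (hcb : IsCoprime c b) (hd : d ≠ 0) (hdb : |d| < b)
    (n : ℤ) : (d : ℝ) * (c / b) ≠ n := by
  have hd_pos : 0 < |d| := abs_pos.2 hd
  have hb : (b : ℝ) ≠ 0 := Int.cast_ne_zero.2 (by omega)
  intro H
  have hnb : n * b = d * c := by
    rw [mul_div_assoc', div_eq_iff hb] at H
    exact_mod_cast H.symm
  have hbd : b ∣ d := hcb.symm.dvd_of_dvd_mul_right ⟨n, by rw [← hnb, mul_comm]⟩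
  exact hdb.not_ge (Int.le_of_dvd hd_pos ((dvd_abs _ _).2 hbd))

theorem stmt8_general {k : ℕ} (a : Fin k → ℂ) (ω : Fin k → ℤ) (hω : Function.Injective ω)
    (N : ℕ)
    (p : ℕ) (hp : 1 < p) (h : ℕ)
    (j₁ j₂ : Fin k) (hj : j₁ ≠ j₂)
    (hrange₁ : -(N : ℤ) ≤ 2 * ω j₁ ∧ 2 * ω j₁ < (N : ℤ))
    (hrange₂ : -(N : ℤ) ≤ 2 * ω j₂ ∧ 2 * ω j₂ < (N : ℤ))
    (hpair : aliasIdx ω p h = {j₁, j₂})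
    (ha₁ : (a j₁).im = 0) (ha₂ : (a j₂).im = 0)
    (ha₁0 : a j₁ ≠ 0) (ha₂0 : a j₂ ≠ 0)
    (c b : ℤ) (hcb : IsCoprime c b) (hb : (N : ℤ) ≤ b)
    (ε : ℝ) (hε : ε = (c : ℝ) / (b : ℝ)) :
    ‖sdft a ω p ε h‖ ≠ ‖sdft a ω p 0 h‖ := by
  have hd : ω j₁ - ω j₂ ≠ 0 := sub_ne_zero.2 (hω.ne hj)
  have hdb : |ω j₁ - ω j₂| < b := by rw [abs_lt]; omega
  obtain ⟨r₁, hr₁⟩ : ∃ r : ℝ, (r : ℂ) = a j₁ := ⟨_, Complex.ext rfl (by simpa using ha₁.symm)⟩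
  obtain ⟨r₂, hr₂⟩ : ∃ r : ℝ, (r : ℂ) = a j₂ := ⟨_, Complex.ext rfl (by simpa using ha₂.symm)⟩
  have hr₁0 : r₁ ≠ 0 := by rintro rfl; simp [← hr₁] at ha₁0
  have hr₂0 : r₂ ≠ 0 := by rintro rfl; simp [← hr₂] at ha₂0
  intro H
  rw [sdft_eq_mul_sum_aliasIdx a ω (by omega), sdft_eq_mul_sum_aliasIdx a ω (by omega), hpair,
    sum_pair hj, sum_pair hj, norm_mul, norm_mul, mul_right_inj' (by simp; omega), ← hr₁, ← hr₂]
    at H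
  simp only [mul_zero, ofReal_zero, Complex.exp_zero, mul_one] at H
  obtain ⟨n, hn⟩ := exists_int_sub_eq_of_norm_add_eq hr₁0 hr₂0 H
  refine intCast_mul_div_ne_intCast hcb hd hdb n ?_
  rw [← hn, hε]
  push_cast
  ring

theorem stmt8 {k : ℕ} (a : Fin k → ℂ) (ω : Fin k → ℤ) (hω : Function.Injective ω)
    (N : ℕ) (hN : 1 < N)
    (p : ℕ) (hp : 1 < p) (h : ℕ) (hh : h < p)
    (j₁ j₂ : Fin k) (hj : j₁ ≠ j₂)
    (hrange₁ : -(N : ℤ) ≤ 2 * ω j₁ ∧ 2 * ω j₁ < (N : ℤ))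
    (hrange₂ : -(N : ℤ) ≤ 2 * ω j₂ ∧ 2 * ω j₂ < (N : ℤ))
    (hpair : aliasIdx ω p h = {j₁, j₂})
    (ha₁ : (a j₁).im = 0) (ha₂ : (a j₂).im = 0)
    (ha₁0 : a j₁ ≠ 0) (ha₂0 : a j₂ ≠ 0)
    (c b : ℤ) (hcb : IsCoprime c b) (hc : c ≠ 0) (hb : (N : ℤ) ≤ b)
    (ε : ℝ) (hε : ε = (c : ℝ) / (b : ℝ)) :
    ‖sdft a ω p ε h‖ ≠ ‖sdft a ω p 0 h‖ :=
  stmt8_general a ω hω N p hp h j₁ j₂ hj hrange₁ hrange₂ hpair ha₁ ha₂ ha₁0 ha₂0 c b hcb hb ε hε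
end

section
/- Let S(t) = ∑_{j=1}^k a_j e^{2πi ω_j t} with distinct integer frequencies ω_j and nonzero complex coefficients a_j, let p > 1 be an integer, h ∈ {0,…,p−1}, and suppose |I(S,h;p)| > 1. Then the function f(ε) = |Ŝ_{p,ε}[h]|² − |Ŝ_p[h]|² is a real trigonometric polynomial in ε that is not identically zero; i.e., there exists ε ∈ ℝ with |Ŝ_{p,ε}[h]| ≠ |Ŝ_p[h]|. -/
/-! Sampling at `n/p + ε` and taking the `h`-th DFT coefficient keeps exactly the frequencies
`ω_j ≡ h (mod p)` (aliasing), so `Ŝ_{p,ε}[h] = p · T(ε)` with `T(ε) = ∑_{j ∈ I(S,h;p)} a_j e^{2πi ω_j ε}`.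
If `|T|` were constant, every nonzero Fourier coefficient of `|T|² = T · conj T` would vanish. But the
largest frequency difference `α = ω_max - ω_min > 0` arises from a single pair, so the coefficient of
`e^{2πi α ε}` is `a_max · conj a_min ≠ 0`. -/

open Complex Finset ComplexConjugate
open scoped Real

lemma integral_exp_two_pi_I_int_mul (m : ℤ) :
    ∫ x in (0 : ℝ)..1, exp (2 * π * I * m * x) = if m = 0 then 1 else 0 := by
  split_ifs with hm
  · simp [hm]
  have hc : 2 * π * I * m ≠ 0 := by simp [hm, Real.pi_ne_zero]
  rw [integral_exp_mul_complex hc]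
  have h1 : exp (2 * π * I * m) = 1 := by
    simpa [mul_comm] using exp_int_mul_two_pi_mul_I m
  simp [h1]

section TrigSum

variable {ι : Type*}

noncomputable def trigSum (s : Finset ι) (c : ι → ℂ) (ν : ι → ℤ) (x : ℝ) : ℂ :=
  ∑ j ∈ s, c j * exp (2 * π * I * ν j * x)

lemma integral_trigSum (s : Finset ι) (c : ι → ℂ) (ν : ι → ℤ) :
    ∫ x in (0 : ℝ)..1, trigSum s c ν x = ∑ j ∈ s with ν j = 0, c j := by
  unfold trigSum
  rw [intervalIntegral.integral_finsetSum fun j _ =>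
    (by fun_prop : Continuous _).intervalIntegrable _ _]
  simp_rw [intervalIntegral.integral_const_mul, integral_exp_two_pi_I_int_mul, mul_ite, mul_one,
    mul_zero, sum_filter]

lemma trigSum_mul_conj_mul_exp (s : Finset ι) (c : ι → ℂ) (ν : ι → ℤ) (m : ℤ) (x : ℝ) :
    trigSum s c ν x * conj (trigSum s c ν x) * exp (2 * π * I * m * x) =
      trigSum (s ×ˢ s) (fun q => c q.1 * conj (c q.2)) (fun q => ν q.1 - ν q.2 + m) x := by
  simp only [trigSum, map_sum, map_mul, ← exp_conj, conj_ofReal, conj_I, map_ofNat, map_intCast]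
  rw [sum_mul_sum, sum_product]
  simp_rw [sum_mul]
  refine sum_congr rfl fun j _ => sum_congr rfl fun l _ => ?_
  rw [mul_mul_mul_comm, mul_assoc, ← exp_add, ← exp_add]
  congr 2
  push_cast
  ring

lemma filter_sub_eq_max_sub_min {s : Finset ι} {ν : ι → ℤ} (hν : Set.InjOn ν s) {jM jm : ι}
    (hjM : jM ∈ s) (hjm : jm ∈ s) (hmax : ∀ j ∈ s, ν j ≤ ν jM) (hmin : ∀ j ∈ s, ν jm ≤ ν j) :
    {q ∈ s ×ˢ s | ν q.1 - ν q.2 = ν jM - ν jm} = {(jM, jm)} := by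
  ext ⟨j, l⟩
  simp only [mem_filter, mem_product, mem_singleton, Prod.mk.injEq]
  constructor
  · rintro ⟨⟨hj, hl⟩, hdiff⟩
    have := hmax j hj
    have := hmin l hl
    exact ⟨hν hj hjM (by omega), hν hl hjm (by omega)⟩
  · rintro ⟨rfl, rfl⟩
    exact ⟨⟨hjM, hjm⟩, rfl⟩

theorem exists_norm_trigSum_ne {s : Finset ι} {c : ι → ℂ} {ν : ι → ℤ} (hν : Set.InjOn ν s)
    (hc : ∀ j ∈ s, c j ≠ 0) (hs : 1 < s.card) :
    ∃ x : ℝ, ‖trigSum s c ν x‖ ≠ ‖trigSum s c ν 0‖ := by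
  by_contra! hconst
  have hne : s.Nonempty := card_pos.1 (by omega)
  obtain ⟨jM, hjM, hmax⟩ := s.exists_max_image ν hne
  obtain ⟨jm, hjm, hmin⟩ := s.exists_min_image ν hne
  obtain ⟨j, hj, hjjm⟩ := exists_mem_ne hs jm
  have hlt : ν jm < ν jM := by
    have := hmin j hj
    have := hmax j hj
    have : ν j ≠ ν jm := fun h => hjjm (hν hj hjm h)
    omega
  set T := trigSum s c ν
  have hcoeff : ∫ x in (0 : ℝ)..1, T x * conj (T x) * exp (2 * π * I * ↑(ν jm - ν jM) * x) =
      c jM * conj (c jm) := by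
    simp_rw [T, trigSum_mul_conj_mul_exp, integral_trigSum, add_eq_zero_iff_eq_neg, neg_sub]
    rw [filter_sub_eq_max_sub_min hν hjM hjm hmax hmin, sum_singleton]
  have hzero : ∫ x in (0 : ℝ)..1, T x * conj (T x) * exp (2 * π * I * ↑(ν jm - ν jM) * x) = 0 := by
    simp_rw [mul_conj', hconst, intervalIntegral.integral_const_mul,
      integral_exp_two_pi_I_int_mul, if_neg (by omega : ν jm - ν jM ≠ 0), mul_zero]
  exact mul_ne_zero (hc jM hjM) ((map_ne_zero _).2 (hc jm hjm)) (hcoeff.symm.trans hzero)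

end TrigSum

lemma sum_range_exp_two_pi_I_int_mul_div {p : ℕ} (hp : p ≠ 0) (m : ℤ) :
    ∑ n ∈ range p, exp (2 * π * I * m * n / p) = if (p : ℤ) ∣ m then (p : ℂ) else 0 := by
  have hζ := isPrimitiveRoot_exp p hp
  have hterm : ∀ n : ℕ, exp (2 * π * I * m * n / p) = (exp (2 * π * I / p) ^ m) ^ n := fun n => by
    rw [← exp_int_mul, ← exp_nat_mul]
    congr 1
    ring
  simp_rw [hterm]
  split_ifs with hdvd
  · simp [(hζ.zpow_eq_one_iff_dvd m).2 hdvd]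
  · have hz : exp (2 * π * I / p) ^ m ≠ 1 := fun h => hdvd ((hζ.zpow_eq_one_iff_dvd m).1 h)
    have hzp : (exp (2 * π * I / p) ^ m) ^ p = 1 := by
      rw [← zpow_natCast, ← zpow_mul, mul_comm m, zpow_mul, zpow_natCast, hζ.pow_eq_one, one_zpow]
    rw [geom_sum_eq hz, hzp, sub_self, zero_div]

lemma sdft_eq_natCast_mul_trigSum {k : ℕ} (a : Fin k → ℂ) (ω : Fin k → ℤ) {p : ℕ} (hp : p ≠ 0)
    (ε : ℝ) (h : ℕ) : sdft a ω p ε h = p * trigSum (aliasIdx ω p h) a ω ε := by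
  have hterm : ∀ j, ∀ n : ℕ,
      a j * exp (2 * π * I * ω j * ↑((n : ℝ) / p + ε)) * exp (-(2 * π * I) * n * h / p) =
        a j * exp (2 * π * I * ω j * ε) * exp (2 * π * I * ↑(ω j - h) * n / p) := fun j n => by
    rw [mul_assoc (a j), ← exp_add, mul_assoc (a j), ← exp_add]
    congr 2
    push_cast
    ring
  simp only [sdft, signal, sum_mul]
  rw [sum_comm]
  simp_rw [hterm, ← mul_sum, sum_range_exp_two_pi_I_int_mul_div hp, mul_ite, mul_zero, ← sum_filter]
  rw [trigSum, mul_sum, aliasIdx]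
  refine sum_congr (filter_congr fun j _ => ?_) fun j _ => mul_comm _ _
  exact (Int.modEq_iff_dvd.trans dvd_sub_comm).symm

theorem stmt17_general {k : ℕ} (a : Fin k → ℂ) (ω : Fin k → ℤ) (hω : Function.Injective ω)
    (ha : ∀ j, a j ≠ 0) (p : ℕ) (hp : 1 < p) (h : ℕ)
    (hq : 1 < (aliasIdx ω p h).card) :
    ∃ ε : ℝ, ‖sdft a ω p ε h‖ ≠ ‖sdft a ω p 0 h‖ := by
  obtain ⟨ε, hε⟩ := exists_norm_trigSum_ne hω.injOn (fun j _ => ha j) hq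
  have hp0 : p ≠ 0 := by omega
  refine ⟨ε, fun hnorm => hε ?_⟩
  rw [sdft_eq_natCast_mul_trigSum a ω hp0, sdft_eq_natCast_mul_trigSum a ω hp0, norm_mul,
    norm_mul] at hnorm
  exact mul_left_cancel₀ (by simpa using hp0) hnorm

theorem stmt17 {k : ℕ} (a : Fin k → ℂ) (ω : Fin k → ℤ) (hω : Function.Injective ω)
    (ha : ∀ j, a j ≠ 0) (p : ℕ) (hp : 1 < p) (h : ℕ) (hh : h < p)
    (hq : 1 < (aliasIdx ω p h).card) :
    ∃ ε : ℝ, ‖sdft a ω p ε h‖ ≠ ‖sdft a ω p 0 h‖ :=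
  stmt17_general a ω hω ha p hp h hq
end
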